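/- arXiv:1507.08620 — 3 statements merged into one kernel-verified Lean document; each statement's English description precedes it below -/
import Mathlib

section
/- (Proposition 1, abstract form.) Let X be a finite set with n = |X| ≥ 1 and let v : Finset X → ℝ be a game with v(∅) = 0. Suppose there is a constant k ∈ ℝ such that v({a}) = k for every a ∈ X (as happens for the rooted phylogenetic-diversity game of an ultrametric tree, where every leaf has the same distance k to the root). Then the rankings induced by the original and the modified Shapley Value are identical; that is, for all x, y ∈ X: SV_v(x) ≥ SV_v(y) if and only if modSV_v(x) ≥ modSV_v(y). -/
open Finset

/-- The original Shapley Value of a player `a` in the game `v`. -/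
noncomputable def shapleyValue {X : Type*} [Fintype X] [DecidableEq X]
    (v : Finset X → ℝ) (a : X) : ℝ :=
  (1 / (Nat.factorial (Fintype.card X) : ℝ)) *
    ∑ S ∈ Finset.univ.filter (fun S : Finset X => a ∈ S),
      ((Nat.factorial (S.card - 1) : ℝ) *
        (Nat.factorial (Fintype.card X - S.card) : ℝ) * (v S - v (S.erase a)))

/-- The modified Shapley Value: only coalitions of size at least 2 are considered. -/
noncomputable def modShapleyValue {X : Type*} [Fintype X] [DecidableEq X]
    (v : Finset X → ℝ) (a : X) : ℝ :=
  (1 / (Nat.factorial (Fintype.card X) : ℝ)) *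
    ∑ S ∈ Finset.univ.filter (fun S : Finset X => a ∈ S ∧ 2 ≤ S.card),
      ((Nat.factorial (S.card - 1) : ℝ) *
        (Nat.factorial (Fintype.card X - S.card) : ℝ) * (v S - v (S.erase a)))


theorem shapley_modShapley_same_ranking_of_const_singletons
    {X : Type*} [Fintype X] [DecidableEq X]
    (hn : 1 ≤ Fintype.card X) (v : Finset X → ℝ)
    (hempty : v ∅ = 0) (k : ℝ) (hk : ∀ a : X, v {a} = k) :
    ∀ x y : X, shapleyValue v x ≥ shapleyValue v y ↔
      modShapleyValue v x ≥ modShapleyValue v y := by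
  have key : ∀ a : X, shapleyValue v a = modShapleyValue v a +
      (1 / (Nat.factorial (Fintype.card X) : ℝ)) *
        ((Nat.factorial (Fintype.card X - 1) : ℝ) * k) := by
    intro a
    unfold shapleyValue modShapleyValue
    rw [← mul_add]
    congr 1
    have hsplit := Finset.sum_filter_add_sum_filter_not
      (Finset.univ.filter (fun S : Finset X => a ∈ S))
      (fun S : Finset X => 2 ≤ S.card)
      (fun S : Finset X => ((Nat.factorial (S.card - 1) : ℝ) *
        (Nat.factorial (Fintype.card X - S.card) : ℝ) * (v S - v (S.erase a))))
    rw [Finset.filter_filter, Finset.filter_filter] at hsplit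
    rw [← hsplit]
    congr 1
    have hsing : Finset.univ.filter (fun S : Finset X => a ∈ S ∧ ¬ 2 ≤ S.card)
        = {({a} : Finset X)} := by
      ext S
      simp only [Finset.mem_filter, Finset.mem_univ, true_and, Finset.mem_singleton,
        not_le]
      constructor
      · rintro ⟨haS, hcard⟩
        have h1 : 1 ≤ S.card := Finset.one_le_card.mpr ⟨a, haS⟩
        have : S.card = 1 := by omega
        obtain ⟨b, hb⟩ := Finset.card_eq_one.mp this
        subst hb
        simp at haS
        subst haS; rfl
      · rintro rfl
        simp
    rw [hsing, Finset.sum_singleton]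
    simp [hk a, hempty]
  intro x y
  rw [key x, key y]
  constructor <;> intro h <;> linarith
end

section
/- (Fuchs–Jin theorem in abstract form: the Shapley Value of the rooted phylogenetic-diversity game equals the Fair Proportion Index.) Let X be a finite set with n = |X| ≥ 1, let E be a finite set, λ : E → ℝ, and for each e ∈ E let C_e ⊆ X be nonempty. Define the game v : Finset X → ℝ by v(S) = ∑_{e ∈ E, S ∩ C_e ≠ ∅} λ(e) (so in particular v(∅) = 0). Then for every a ∈ X, SV_v(a) = ∑_{e ∈ E, a ∈ C_e} λ(e)/|C_e| = FP(a). -/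
open Finset

lemma hockey (k m : ℕ) : ∑ t ∈ range (m+1), (k + t).choose k = (k + m + 1).choose (k+1) := by
  induction m with
  | zero => simp
  | succ m ih =>
      rw [sum_range_succ, ih, show k + (m+1) = k + m + 1 by ring,
        show k + m + 1 + 1 = (k + m + 1) + 1 by ring, Nat.choose_succ_succ' (k+m+1) k]
      omega

lemma key_nat (k m : ℕ) :
    (k+1) * ∑ t ∈ range (m+1), m.choose t * t.factorial * (m + k - t).factorial
      = (m + k + 1).factorial := by
  have hterm : ∀ t ∈ range (m+1),
      m.choose t * t.factorial * (m + k - t).factorial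
        = m.factorial * k.factorial * (m + k - t).choose k := by
    intro t ht
    rw [mem_range] at ht
    have htm : t ≤ m := by omega
    apply Nat.eq_of_mul_eq_mul_right (Nat.factorial_pos (m - t))
    have h1 : m.choose t * t.factorial * (m - t).factorial = m.factorial :=
      Nat.choose_mul_factorial_mul_factorial htm
    have h2 : (m + k - t).choose k * k.factorial * (m - t).factorial = (m + k - t).factorial := by
      have := Nat.choose_mul_factorial_mul_factorial (show k ≤ m + k - t by omega)
      rwa [show m + k - t - k = m - t by omega] at this
    calc m.choose t * t.factorial * (m + k - t).factorial * (m - t).factorial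
        = (m.choose t * t.factorial * (m - t).factorial) * (m + k - t).factorial := by ring
      _ = m.factorial * (m + k - t).factorial := by rw [h1]
      _ = m.factorial * ((m + k - t).choose k * k.factorial * (m - t).factorial) := by rw [h2]
      _ = m.factorial * k.factorial * (m + k - t).choose k * (m - t).factorial := by ring
  rw [sum_congr rfl hterm, ← mul_sum]
  have hrefl : ∑ t ∈ range (m+1), (m + k - t).choose k
      = ∑ t ∈ range (m+1), (k + t).choose k := by
    rw [← sum_range_reflect (fun t => (k + t).choose k) (m+1)]
    apply sum_congr rfl
    intro t ht
    rw [mem_range] at ht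
    congr 1
    omega
  rw [hrefl, hockey]
  have := Nat.choose_mul_factorial_mul_factorial (show k + 1 ≤ k + m + 1 by omega)
  rw [show k + m + 1 - (k+1) = m by omega] at this
  calc (k+1) * (m.factorial * k.factorial * (k + m + 1).choose (k+1))
      = (k + m + 1).choose (k+1) * ((k+1) * k.factorial) * m.factorial := by ring
    _ = (k + m + 1).choose (k+1) * (k+1).factorial * m.factorial := by rw [Nat.factorial_succ]
    _ = (k + m + 1).factorial := this
    _ = (m + k + 1).factorial := by rw [show k + m + 1 = m + k + 1 by ring]
  

lemma per_edge {X : Type*} [Fintype X] [DecidableEq X] (a : X) (Co : Finset X) (ha : a ∈ Co) :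
    ∑ S ∈ Finset.univ.filter (fun S : Finset X => S ∩ Co = {a}),
      ((Nat.factorial (S.card - 1) : ℝ) * (Nat.factorial (Fintype.card X - S.card) : ℝ))
      = (Nat.factorial (Fintype.card X) : ℝ) / (Co.card : ℝ) := by
  classical
  set n := Fintype.card X with hn
  set c := Co.card with hcdef
  have hc : 1 ≤ c := Finset.card_pos.mpr ⟨a, ha⟩
  have hcn : c ≤ n := Finset.card_le_card (Finset.subset_univ Co)
  -- bijection with powerset of univ \ Co
  have hbij : ∑ S ∈ Finset.univ.filter (fun S : Finset X => S ∩ Co = {a}),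
      ((Nat.factorial (S.card - 1) : ℝ) * (Nat.factorial (n - S.card) : ℝ))
      = ∑ T ∈ (Finset.univ \ Co).powerset,
      ((Nat.factorial T.card : ℝ) * (Nat.factorial (n - (T.card + 1)) : ℝ)) := by
    apply sum_nbij' (fun S => S.erase a) (fun T => insert a T)
    · intro S hS
      rw [mem_filter] at hS
      rw [mem_powerset]
      intro x hx
      rw [mem_erase] at hx
      rw [mem_sdiff]
      refine ⟨mem_univ x, fun hxC => hx.1 ?_⟩
      have : x ∈ S ∩ Co := mem_inter.mpr ⟨hx.2, hxC⟩
      rw [hS.2] at this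
      exact mem_singleton.mp this
    · intro T hT
      rw [mem_powerset] at hT
      rw [mem_filter]
      refine ⟨mem_univ _, ?_⟩
      ext x
      simp only [mem_inter, mem_insert, mem_singleton]
      constructor
      · rintro ⟨hx1 | hx1, hx2⟩
        · exact hx1
        · exact absurd hx2 (mem_sdiff.mp (hT hx1)).2
      · rintro rfl; exact ⟨Or.inl rfl, ha⟩
    · intro S hS
      rw [mem_filter] at hS
      apply insert_erase
      have : a ∈ S ∩ Co := by rw [hS.2]; exact mem_singleton_self a
      exact (mem_inter.mp this).1
    · intro T hT
      rw [mem_powerset] at hT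
      apply erase_insert
      intro haT
      exact (mem_sdiff.mp (hT haT)).2 ha
    · intro S hS
      rw [mem_filter] at hS
      have haS : a ∈ S := by
        have : a ∈ S ∩ Co := by rw [hS.2]; exact mem_singleton_self a
        exact (mem_inter.mp this).1
      have hS1 : 1 ≤ S.card := Finset.card_pos.mpr ⟨a, haS⟩
      rw [card_erase_of_mem haS, show S.card - 1 + 1 = S.card by omega]
  rw [hbij, sum_powerset_apply_card (fun t => ((Nat.factorial t : ℝ) * (Nat.factorial (n - (t + 1)) : ℝ)))]
  have hcard : (Finset.univ \ Co).card = n - c := by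
    rw [card_sdiff_of_subset (Finset.subset_univ Co), card_univ]
  rw [hcard]
  -- now use key_nat with k = c - 1, m = n - c
  have hkey := key_nat (c - 1) (n - c)
  rw [show (c - 1) + 1 = c by omega, show (n - c) + (c - 1) + 1 = n by omega] at hkey
  have hsum : ∑ t ∈ range (n - c + 1), (n - c).choose t •
      ((Nat.factorial t : ℝ) * (Nat.factorial (n - (t + 1)) : ℝ))
      = ((∑ t ∈ range (n - c + 1),
          (n - c).choose t * t.factorial * ((n - c) + (c-1) - t).factorial : ℕ) : ℝ) := by
    push_cast
    apply sum_congr rfl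
    intro t ht
    rw [mem_range] at ht
    rw [nsmul_eq_mul, show (n - c) + (c-1) - t = n - (t+1) by omega]
    ring
  rw [hsum]
  have hc0 : (c : ℝ) ≠ 0 := by positivity
  rw [eq_div_iff hc0, ← Nat.cast_mul, Nat.cast_inj, mul_comm]
  exact hkey

theorem shapley_eq_fairProportion {X : Type*} [Fintype X] [DecidableEq X]
    (hn : 1 ≤ Fintype.card X)
    {E : Type*} [Fintype E] (lam : E → ℝ) (C : E → Finset X)
    (hC : ∀ e : E, (C e).Nonempty) (a : X) :
    shapleyValue
        (fun S : Finset X =>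
          ∑ e ∈ Finset.univ.filter (fun e : E => (S ∩ C e).Nonempty), lam e) a
      = ∑ e ∈ Finset.univ.filter (fun e : E => a ∈ C e), lam e / ((C e).card : ℝ) := by
  classical
  unfold shapleyValue
  set n := Fintype.card X with hndef
  -- Step 1: rewrite the marginal contribution
  have hv : ∀ S : Finset X, a ∈ S →
      ((∑ e ∈ Finset.univ.filter (fun e : E => (S ∩ C e).Nonempty), lam e)
        - ∑ e ∈ Finset.univ.filter (fun e : E => ((S.erase a) ∩ C e).Nonempty), lam e)
      = ∑ e : E, (if S ∩ C e = {a} then lam e else 0) := by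
    intro S haS
    rw [sum_filter, sum_filter, ← sum_sub_distrib]
    apply sum_congr rfl
    intro e _
    by_cases hae : a ∈ C e
    · have h1 : (S ∩ C e).Nonempty := ⟨a, mem_inter.mpr ⟨haS, hae⟩⟩
      rw [if_pos h1]
      by_cases heq : S ∩ C e = {a}
      · rw [if_pos heq, if_neg, sub_zero]
        rintro ⟨x, hx⟩
        rw [mem_inter, mem_erase] at hx
        have hx' : x ∈ S ∩ C e := mem_inter.mpr ⟨hx.1.2, hx.2⟩
        rw [heq, mem_singleton] at hx'
        exact hx.1.1 hx'
      · rw [if_neg heq, if_pos, sub_self]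
        obtain ⟨x, hx, hxa⟩ : ∃ x ∈ S ∩ C e, x ≠ a := by
          by_contra h
          push_neg at h
          exact heq (Finset.eq_singleton_iff_unique_mem.mpr
            ⟨mem_inter.mpr ⟨haS, hae⟩, fun x hx => h x hx⟩)
        exact ⟨x, mem_inter.mpr ⟨mem_erase.mpr ⟨hxa, (mem_inter.mp hx).1⟩,
          (mem_inter.mp hx).2⟩⟩
    · have hsame : S.erase a ∩ C e = S ∩ C e := by
        ext x
        simp only [mem_inter, mem_erase]
        constructor
        · rintro ⟨⟨_, h1⟩, h2⟩; exact ⟨h1, h2⟩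
        · rintro ⟨h1, h2⟩
          exact ⟨⟨fun hx => hae (hx ▸ h2), h1⟩, h2⟩
      rw [hsame, sub_self, if_neg]
      intro heq
      have hmem : a ∈ S ∩ C e := by rw [heq]; exact mem_singleton_self a
      exact hae (mem_inter.mp hmem).2
  -- Step 2: rewrite the big sum
  have hstep : ∑ S ∈ Finset.univ.filter (fun S : Finset X => a ∈ S),
      ((Nat.factorial (S.card - 1) : ℝ) * (Nat.factorial (n - S.card) : ℝ) *
        ((∑ e ∈ Finset.univ.filter (fun e : E => (S ∩ C e).Nonempty), lam e)
          - ∑ e ∈ Finset.univ.filter (fun e : E => ((S.erase a) ∩ C e).Nonempty), lam e))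
      = ∑ e : E, (if a ∈ C e then (Nat.factorial n : ℝ) / ((C e).card : ℝ) * lam e else 0) := by
    have h1 : ∀ S ∈ Finset.univ.filter (fun S : Finset X => a ∈ S),
        ((Nat.factorial (S.card - 1) : ℝ) * (Nat.factorial (n - S.card) : ℝ) *
          ((∑ e ∈ Finset.univ.filter (fun e : E => (S ∩ C e).Nonempty), lam e)
            - ∑ e ∈ Finset.univ.filter (fun e : E => ((S.erase a) ∩ C e).Nonempty), lam e))
        = ∑ e : E, (if S ∩ C e = {a} then
            (Nat.factorial (S.card - 1) : ℝ) * (Nat.factorial (n - S.card) : ℝ) * lam e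
          else 0) := by
      intro S hS
      rw [hv S (mem_filter.mp hS).2, mul_sum]
      apply sum_congr rfl
      intro e _
      rw [mul_ite, mul_zero]
    rw [sum_congr rfl h1, sum_comm]
    apply sum_congr rfl
    intro e _
    by_cases hae : a ∈ C e
    · rw [if_pos hae, ← sum_filter, filter_filter]
      have hfe : Finset.univ.filter (fun S : Finset X => a ∈ S ∧ S ∩ C e = {a})
          = Finset.univ.filter (fun S : Finset X => S ∩ C e = {a}) := by
        apply filter_congr
        intro S _
        simp only [and_iff_right_iff_imp]
        intro heq
        have : a ∈ S ∩ C e := by rw [heq]; exact mem_singleton_self a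
        exact (mem_inter.mp this).1
      rw [hfe, ← sum_mul, per_edge a (C e) hae]
    · rw [if_neg hae]
      apply sum_eq_zero
      intro S _
      rw [if_neg]
      intro heq
      have : a ∈ S ∩ C e := by rw [heq]; exact mem_singleton_self a
      exact hae (mem_inter.mp this).2
  rw [hstep, mul_sum, sum_filter]
  apply sum_congr rfl
  intro e _
  by_cases hae : a ∈ C e
  · rw [if_pos hae, if_pos hae]
    have hfac : (Nat.factorial n : ℝ) ≠ 0 := by positivity
    field_simp
  · rw [if_neg hae, if_neg hae, mul_zero]
end

section
/- For every n ≥ 1 and all permutations σ, τ of {1, 2, …, n}, the Manhattan distance satisfies ∑_{i=1}^n |σ(i) − τ(i)| ≤ ∑_{i=1}^n |(n + 1 − i) − i|; that is, the maximal Manhattan distance between two permutation vectors of length n is attained by the pair consisting of the identity (1, 2, …, n) and the reversal (n, n−1, …, 1). -/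
open Finset

-- sum of f over permuted values equals sum of f
lemma perm_sum_eq (n : ℕ) (σ : ℕ → ℕ)
    (hσ : Set.BijOn σ (Set.Icc 1 n) (Set.Icc 1 n)) (f : ℕ → ℤ) :
    ∑ i ∈ Finset.Icc 1 n, f (σ i) = ∑ i ∈ Finset.Icc 1 n, f i := by
  apply Finset.sum_bij (fun a _ => σ a)
  · intro a ha
    have : σ a ∈ Set.Icc 1 n := hσ.mapsTo (by simpa [Set.mem_Icc] using Finset.mem_Icc.mp ha)
    simpa [Finset.mem_Icc] using this
  · intro a ha b hb h
    exact hσ.injOn (by simpa [Set.mem_Icc] using Finset.mem_Icc.mp ha)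
      (by simpa [Set.mem_Icc] using Finset.mem_Icc.mp hb) h
  · intro b hb
    obtain ⟨a, ha, rfl⟩ := hσ.surjOn (by simpa [Set.mem_Icc] using Finset.mem_Icc.mp hb)
    exact ⟨a, by simpa [Finset.mem_Icc] using ha, rfl⟩
  · intro a ha; rfl

lemma card_filter_perm (n t : ℕ) (ht : 1 ≤ t) (σ : ℕ → ℕ)
    (hσ : Set.BijOn σ (Set.Icc 1 n) (Set.Icc 1 n)) :
    ((Finset.Icc 1 n).filter (fun i => t ≤ σ i)).card = n + 1 - t := by
  have : ((Finset.Icc 1 n).filter (fun i => t ≤ σ i)).card = (Finset.Icc t n).card := by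
    apply Finset.card_bij (fun a _ => σ a)
    · intro a ha
      rw [Finset.mem_filter, Finset.mem_Icc] at ha
      have : σ a ∈ Set.Icc 1 n := hσ.mapsTo (by simp [Set.mem_Icc]; omega)
      rw [Set.mem_Icc] at this
      rw [Finset.mem_Icc]; omega
    · intro a ha b hb h
      rw [Finset.mem_filter, Finset.mem_Icc] at ha hb
      exact hσ.injOn (by simp [Set.mem_Icc]; omega) (by simp [Set.mem_Icc]; omega) h
    · intro b hb
      rw [Finset.mem_Icc] at hb
      obtain ⟨a, ha, rfl⟩ := hσ.surjOn (show b ∈ Set.Icc 1 n by simp [Set.mem_Icc]; omega)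
      rw [Set.mem_Icc] at ha
      exact ⟨a, by rw [Finset.mem_filter, Finset.mem_Icc]; omega, rfl⟩
  rw [this, Nat.card_Icc]

lemma min_as_card (n a b : ℕ) (ha : 1 ≤ a) (hb : 1 ≤ b) (han : a ≤ n) :
    min a b = ((Finset.Icc 1 n).filter (fun t => t ≤ a ∧ t ≤ b)).card := by
  have : (Finset.Icc 1 n).filter (fun t => t ≤ a ∧ t ≤ b) = Finset.Icc 1 (min a b) := by
    ext t; simp only [Finset.mem_filter, Finset.mem_Icc]; omega
  rw [this, Nat.card_Icc]; omega

lemma key_min_sum (n : ℕ) (σ τ : ℕ → ℕ)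
    (hσ : Set.BijOn σ (Set.Icc 1 n) (Set.Icc 1 n))
    (hτ : Set.BijOn τ (Set.Icc 1 n) (Set.Icc 1 n)) :
    ∑ i ∈ Finset.Icc 1 n, min i (n + 1 - i) ≤
      ∑ i ∈ Finset.Icc 1 n, min (σ i) (τ i) := by
  -- rewrite each side as double sum
  have mem_bounds : ∀ f, Set.BijOn f (Set.Icc 1 n) (Set.Icc 1 n) →
      ∀ i ∈ Finset.Icc 1 n, 1 ≤ f i ∧ f i ≤ n := by
    intro f hf i hi
    have : f i ∈ Set.Icc 1 n := hf.mapsTo (by simpa [Set.mem_Icc] using Finset.mem_Icc.mp hi)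
    simpa [Set.mem_Icc] using this
  have hL : ∑ i ∈ Finset.Icc 1 n, min (σ i) (τ i)
      = ∑ t ∈ Finset.Icc 1 n, ((Finset.Icc 1 n).filter (fun i => t ≤ σ i ∧ t ≤ τ i)).card := by
    have h1 : ∀ i ∈ Finset.Icc 1 n, min (σ i) (τ i)
        = ∑ t ∈ Finset.Icc 1 n, if t ≤ σ i ∧ t ≤ τ i then 1 else 0 := by
      intro i hi
      obtain ⟨h1, h2⟩ := mem_bounds σ hσ i hi
      obtain ⟨h3, h4⟩ := mem_bounds τ hτ i hi
      rw [min_as_card n (σ i) (τ i) h1 h3 h2, Finset.card_filter]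
    rw [Finset.sum_congr rfl h1, Finset.sum_comm]
    exact Finset.sum_congr rfl fun t _ => (Finset.card_filter _ _).symm
  have hR : ∑ i ∈ Finset.Icc 1 n, min i (n + 1 - i)
      = ∑ t ∈ Finset.Icc 1 n, ((Finset.Icc 1 n).filter (fun i => t ≤ i ∧ t ≤ n + 1 - i)).card := by
    have h1 : ∀ i ∈ Finset.Icc 1 n, min i (n + 1 - i)
        = ∑ t ∈ Finset.Icc 1 n, if t ≤ i ∧ t ≤ n + 1 - i then 1 else 0 := by
      intro i hi
      rw [Finset.mem_Icc] at hi
      rw [min_as_card n i (n+1-i) (by omega) (by omega) (by omega), Finset.card_filter]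
    rw [Finset.sum_congr rfl h1, Finset.sum_comm]
    exact Finset.sum_congr rfl fun t _ => (Finset.card_filter _ _).symm
  rw [hL, hR]
  apply Finset.sum_le_sum
  intro t ht
  rw [Finset.mem_Icc] at ht
  -- RHS filter card = n + 2 - 2t (truncated)
  have hRc : ((Finset.Icc 1 n).filter (fun i => t ≤ i ∧ t ≤ n + 1 - i)).card
      = (n + 2) - 2 * t := by
    have : (Finset.Icc 1 n).filter (fun i => t ≤ i ∧ t ≤ n + 1 - i)
        = Finset.Icc t (n + 1 - t) := by
      ext i; simp only [Finset.mem_filter, Finset.mem_Icc]; omega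
    rw [this, Nat.card_Icc]; omega
  rw [hRc]
  -- LHS: intersection card bound
  set A := (Finset.Icc 1 n).filter (fun i => t ≤ σ i) with hA
  set B := (Finset.Icc 1 n).filter (fun i => t ≤ τ i) with hB
  have hAB : (Finset.Icc 1 n).filter (fun i => t ≤ σ i ∧ t ≤ τ i) = A ∩ B := by
    ext i; simp [hA, hB, Finset.mem_filter, Finset.mem_inter]; tauto
  have hcardA : A.card = n + 1 - t := card_filter_perm n t ht.1 σ hσ
  have hcardB : B.card = n + 1 - t := card_filter_perm n t ht.1 τ hτ
  have hunion : (A ∪ B).card ≤ n := by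
    have : A ∪ B ⊆ Finset.Icc 1 n := by
      apply Finset.union_subset <;> exact Finset.filter_subset _ _
    calc (A ∪ B).card ≤ (Finset.Icc 1 n).card := Finset.card_le_card this
      _ = n := by rw [Nat.card_Icc]; omega
  have hsum := Finset.card_inter_add_card_union A B
  rw [hAB]
  omega

theorem manhattan_max_at_reversal (n : ℕ) (hn : 1 ≤ n) (σ τ : ℕ → ℕ)
    (hσ : Set.BijOn σ (Set.Icc 1 n) (Set.Icc 1 n))
    (hτ : Set.BijOn τ (Set.Icc 1 n) (Set.Icc 1 n)) :
    ∑ i ∈ Finset.Icc 1 n, |(σ i : ℤ) - (τ i : ℤ)| ≤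
      ∑ i ∈ Finset.Icc 1 n, |((n : ℤ) + 1 - (i : ℤ)) - (i : ℤ)| := by
  have term : ∀ a b : ℕ, |(a : ℤ) - b| = (a : ℤ) + b - 2 * (min a b : ℕ) := by
    intro a b
    rcases abs_cases ((a : ℤ) - b) with ⟨h1, h2⟩ | ⟨h1, h2⟩ <;> omega
  have hrev : Set.BijOn (fun i => n + 1 - i) (Set.Icc 1 n) (Set.Icc 1 n) := by
    refine ⟨fun x hx => ?_, fun x hx y hy h => ?_, fun y hy => ⟨n + 1 - y, ?_, ?_⟩⟩
    · simp only [Set.mem_Icc] at *; omega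
    · simp only [Set.mem_Icc] at *; omega
    · simp only [Set.mem_Icc] at *; omega
    · simp only [Set.mem_Icc] at hy; simp; omega
  have hLHS : ∑ i ∈ Finset.Icc 1 n, |(σ i : ℤ) - (τ i : ℤ)|
      = (∑ i ∈ Finset.Icc 1 n, (σ i : ℤ)) + (∑ i ∈ Finset.Icc 1 n, (τ i : ℤ))
        - 2 * ((∑ i ∈ Finset.Icc 1 n, min (σ i) (τ i) : ℕ) : ℤ) := by
    rw [Finset.sum_congr rfl (fun i _ => term (σ i) (τ i))]
    push_cast
    rw [Finset.sum_sub_distrib, Finset.sum_add_distrib, ← Finset.mul_sum]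
  have hRHS : ∑ i ∈ Finset.Icc 1 n, |((n : ℤ) + 1 - (i : ℤ)) - (i : ℤ)|
      = (∑ i ∈ Finset.Icc 1 n, ((n + 1 - i : ℕ) : ℤ)) + (∑ i ∈ Finset.Icc 1 n, (i : ℤ))
        - 2 * ((∑ i ∈ Finset.Icc 1 n, min (n + 1 - i) i : ℕ) : ℤ) := by
    have h1 : ∀ i ∈ Finset.Icc 1 n, |((n : ℤ) + 1 - (i : ℤ)) - (i : ℤ)|
        = ((n + 1 - i : ℕ) : ℤ) + (i : ℤ) - 2 * (min (n + 1 - i) i : ℕ) := by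
      intro i hi
      rw [Finset.mem_Icc] at hi
      have := term (n + 1 - i) i
      have hc : ((n + 1 - i : ℕ) : ℤ) = (n : ℤ) + 1 - i := by omega
      rw [← hc]; rw [this]
    rw [Finset.sum_congr rfl h1]
    push_cast
    rw [Finset.sum_sub_distrib, Finset.sum_add_distrib, ← Finset.mul_sum]
  rw [hLHS, hRHS]
  have e1 : ∑ i ∈ Finset.Icc 1 n, (σ i : ℤ) = ∑ i ∈ Finset.Icc 1 n, (i : ℤ) :=
    perm_sum_eq n σ hσ (fun j => (j : ℤ))
  have e2 : ∑ i ∈ Finset.Icc 1 n, (τ i : ℤ) = ∑ i ∈ Finset.Icc 1 n, (i : ℤ) :=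
    perm_sum_eq n τ hτ (fun j => (j : ℤ))
  have e3 : ∑ i ∈ Finset.Icc 1 n, ((n + 1 - i : ℕ) : ℤ) = ∑ i ∈ Finset.Icc 1 n, (i : ℤ) :=
    perm_sum_eq n (fun i => n + 1 - i) hrev (fun j => (j : ℤ))
  rw [e1, e2, e3]
  have hmin : ∑ i ∈ Finset.Icc 1 n, min (n + 1 - i) i
      ≤ ∑ i ∈ Finset.Icc 1 n, min (σ i) (τ i) := by
    have := key_min_sum n σ τ hσ hτ
    calc ∑ i ∈ Finset.Icc 1 n, min (n + 1 - i) i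
        = ∑ i ∈ Finset.Icc 1 n, min i (n + 1 - i) := by
          exact Finset.sum_congr rfl fun i _ => min_comm _ _
      _ ≤ _ := this
  have : ((∑ i ∈ Finset.Icc 1 n, min (n + 1 - i) i : ℕ) : ℤ)
      ≤ ((∑ i ∈ Finset.Icc 1 n, min (σ i) (τ i) : ℕ) : ℤ) := by exact_mod_cast hmin
  omega
end
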